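/- arXiv:1901.00185 — 6 statements merged into one kernel-verified Lean document; each statement's English description precedes it below -/
import Mathlib

section
/- Let P be a two-color grid poset with the max property and let L := J_color(P). Suppose L is M-structured for M = [[2,0],[0,2]]. Write (a,b) := wt(max). Let W be the subgroup of GL₂(ℤ) generated by S_α := [[−1,0],[0,1]] and S_β := [[1,0],[0,−1]] (a finite group of order 4). Then in the group ring ℤ[ℤ²]: (Σ_{s∈L} e^{wt(s)}) · (Σ_{w∈W} det(w) e^{w·(1,1)}) = Σ_{w∈W} det(w) e^{w·(a+1,b+1)}. -/
open scoped Classical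

structure GridData (P : Type) [PartialOrder P] where
  m : ℕ
  chain : P → ℕ
  color : P → Fin 2

def IsIdeal {P : Type} [PartialOrder P] (t : Finset P) : Prop :=
  ∀ ⦃x⦄, x ∈ t → ∀ ⦃y⦄, y ≤ x → y ∈ t

namespace GridData

variable {P : Type} [PartialOrder P] [Fintype P]

/-- The defining properties of a grid poset. -/
def IsGridPoset (G : GridData P) : Prop :=
  1 ≤ G.m ∧
  (∀ u : P, G.chain u ∈ Finset.Icc 1 G.m) ∧
  (∀ i ∈ Finset.Icc 1 G.m, ∃ u : P, G.chain u = i) ∧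
  (∀ u v : P, G.chain u = G.chain v → u ≤ v ∨ v ≤ u) ∧
  (∀ u v : P, u ⋖ v → G.chain u = G.chain v ∨ G.chain u = G.chain v + 1)

/-- The defining properties of a two-color grid poset. -/
def IsTwoColorGridPoset (G : GridData P) : Prop :=
  G.IsGridPoset ∧
  (∀ u v : P, G.chain u = G.chain v → G.color u = G.color v) ∧
  (∀ u v : P, Relation.ReflTransGen (fun x y : P => x ⋖ y ∨ y ⋖ x) u v →
    G.chain u = G.chain v + 1 → G.color u ≠ G.color v)

/-- The max property. -/
def MaxProperty (G : GridData P) : Prop :=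
  (∀ u : P, IsMax u → G.chain u ≤ 2) ∧
  (∀ u v : P, IsMax u → IsMax v → u ≠ v → G.color u ≠ G.color v)

/-- The fiber `C i` of the chain function. -/
def fiber (G : GridData P) (i : ℕ) : Finset P :=
  Finset.univ.filter (fun u => G.chain u = i)

/-- One step in a `γ`-component of `J_color(P)`: add or remove a single vertex of
color `γ` while both sets are order ideals. -/
def GStep (G : GridData P) (γ : Fin 2) (s t : Finset P) : Prop :=
  IsIdeal s ∧ IsIdeal t ∧ ∃ u : P, G.color u = γ ∧
    ((u ∉ s ∧ t = insert u s) ∨ (u ∉ t ∧ s = insert u t))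

/-- The `γ`-component of `t` in `J_color(P)`. -/
def comp (G : GridData P) (γ : Fin 2) (t : Finset P) : Set (Finset P) :=
  {s | Relation.ReflTransGen (G.GStep γ) t s}

noncomputable def minCard (G : GridData P) (γ : Fin 2) (t : Finset P) : ℕ :=
  sInf (Finset.card '' G.comp γ t)

noncomputable def maxCard (G : GridData P) (γ : Fin 2) (t : Finset P) : ℕ :=
  sSup (Finset.card '' G.comp γ t)

/-- `m_γ(t) = 2 ρ_γ(t) - l_γ(t)`. -/
noncomputable def mcoord (G : GridData P) (γ : Fin 2) (t : Finset P) : ℤ :=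
  2 * ((t.card : ℤ) - (G.minCard γ t : ℤ)) - ((G.maxCard γ t : ℤ) - (G.minCard γ t : ℤ))

/-- The weight of an element of `J_color(P)` (color `0` is α, color `1` is β). -/
noncomputable def wt (G : GridData P) (t : Finset P) : Fin 2 → ℤ :=
  ![G.mcoord 0 t, G.mcoord 1 t]

/-- `J_color(P)` is `M`-structured. -/
def MStructured (G : GridData P) (M : Matrix (Fin 2) (Fin 2) ℤ) : Prop :=
  ∀ s t : Finset P, IsIdeal s → IsIdeal t → ∀ u : P, u ∉ s → t = insert u s →
    G.wt s + M (G.color u) = G.wt t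

end GridData

/-- The set of units of the ring of 2×2 integer matrices whose underlying matrices
are the two given generators. -/
def genSet (A B : Matrix (Fin 2) (Fin 2) ℤ) : Set ((Matrix (Fin 2) (Fin 2) ℤ)ˣ) :=
  {w | (w : Matrix (Fin 2) (Fin 2) ℤ) = A ∨ (w : Matrix (Fin 2) (Fin 2) ℤ) = B}

/-!
The component `comp_γ(t)` consists of the ideals that agree with `t` off color `γ`; its least and
greatest elements are explicit, hence so is `m_γ(t)`. For a cover `u ⋖ v` between two colors this
formula, applied to `{x < v} ⊂ {x ≤ v}`, is incompatible with a diagonal `M`. So covers keep the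
chain, chain and color are constant along `≤`, and by the max property each color class is a chain.
Thus `L` is a product of chains of lengths `A` and `B`, the numbers of `α`- and `β`-vertices, with
`wt(t) = (2|t_α| - A, 2|t_β| - B)`, and its character is a product of two `sl₂`-characters. As
`W = {1, S_α, S_β, -1}`, the Weyl denominator is `(e^{ε₁} - e^{-ε₁})(e^{ε₂} - e^{-ε₂})`, and each
factor times the matching character telescopes.
-/

namespace GridData

variable {P : Type} [PartialOrder P] {G : GridData P}

lemma wt_apply (t : Finset P) (γ : Fin 2) : G.wt t γ = G.mcoord γ t := by
  fin_cases γ <;> rfl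

section Components

variable {γ : Fin 2} {s t : Finset P}

lemma GStep.symm (h : G.GStep γ s t) : G.GStep γ t s :=
  let ⟨hs, ht, u, hu, h⟩ := h
  ⟨ht, hs, u, hu, h.symm⟩

lemma reflTransGen_gStep_symm (h : Relation.ReflTransGen (G.GStep γ) s t) :
    Relation.ReflTransGen (G.GStep γ) t s := by
  induction h with
  | refl => exact .refl
  | tail _ hstep ih => exact .head hstep.symm ih

lemma reflTransGen_gStep_of_subset (hs : IsIdeal s) (ht : IsIdeal t) (hst : s ⊆ t)
    (hcolor : ∀ x ∈ t, x ∉ s → G.color x = γ) :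
    Relation.ReflTransGen (G.GStep γ) t s := by
  induction hn : (t \ s).card generalizing t with
  | zero =>
    rw [Finset.card_eq_zero, Finset.sdiff_eq_empty_iff_subset] at hn
    rw [hst.antisymm hn]
  | succ n ih =>
    have hne : (t \ s).Nonempty := Finset.card_pos.mp (by omega)
    obtain ⟨x, hx, hxmax⟩ := Finset.exists_maximal hne
    obtain ⟨hxt, hxs⟩ := Finset.mem_sdiff.mp hx
    have herase : IsIdeal (t.erase x) := by
      intro z hz y hyz
      refine Finset.mem_erase.mpr ⟨?_, ht (Finset.mem_of_mem_erase hz) hyz⟩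
      rintro rfl
      have hzs : z ∉ s := fun hzs => hxs (hs hzs hyz)
      exact Finset.ne_of_mem_erase hz
        (le_antisymm (hxmax (Finset.mem_sdiff.mpr ⟨Finset.mem_of_mem_erase hz, hzs⟩) hyz) hyz)
    refine .head ⟨ht, herase, x, hcolor x hxt hxs, .inr ⟨Finset.notMem_erase x t,
      (Finset.insert_erase hxt).symm⟩⟩ (ih herase ?_ ?_ ?_)
    · exact fun z hz => Finset.mem_erase.mpr ⟨fun h => hxs (h ▸ hz), hst hz⟩
    · exact fun z hz hzs => hcolor z (Finset.mem_of_mem_erase hz) hzs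
    · rw [Finset.erase_sdiff_comm, Finset.card_erase_of_mem hx, hn, Nat.add_sub_cancel]

lemma isIdeal_and_mem_iff_of_mem_comp (ht : IsIdeal t) (hs : s ∈ G.comp γ t) :
    IsIdeal s ∧ ∀ x, G.color x ≠ γ → (x ∈ s ↔ x ∈ t) := by
  induction hs with
  | refl => exact ⟨ht, fun _ _ => Iff.rfl⟩
  | tail _ hstep ih =>
    obtain ⟨-, hc, u, hu, hins⟩ := hstep
    refine ⟨hc, fun x hx => ?_⟩
    have hxu : x ≠ u := by rintro rfl; exact hx hu
    rw [← ih.2 x hx]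
    rcases hins with ⟨-, rfl⟩ | ⟨-, rfl⟩ <;> simp [hxu]

variable [Fintype P]

/-- `compBot γ t` and `compTop γ t` are the least and the greatest element of `comp γ t`, so
`ρ_γ(t) = |t| - |compBot γ t|` and `l_γ(t) = |compTop γ t| - |compBot γ t|`. -/
noncomputable def compBot (G : GridData P) (γ : Fin 2) (t : Finset P) : Finset P :=
  Finset.univ.filter fun y => ∃ x ∈ t, G.color x ≠ γ ∧ y ≤ x

noncomputable def compTop (G : GridData P) (γ : Fin 2) (t : Finset P) : Finset P :=
  Finset.univ.filter fun x =>
    (x ∈ t ∧ G.color x ≠ γ) ∨ (G.color x = γ ∧ ∀ y ≤ x, G.color y ≠ γ → y ∈ t)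

@[simp]
lemma mem_compBot {y : P} : y ∈ G.compBot γ t ↔ ∃ x ∈ t, G.color x ≠ γ ∧ y ≤ x := by
  simp [compBot]

@[simp]
lemma mem_compTop {x : P} : x ∈ G.compTop γ t ↔
    (x ∈ t ∧ G.color x ≠ γ) ∨ (G.color x = γ ∧ ∀ y ≤ x, G.color y ≠ γ → y ∈ t) := by
  simp [compTop]

lemma compBot_subset (hs : IsIdeal s) (hst : ∀ x, G.color x ≠ γ → (x ∈ s ↔ x ∈ t)) :
    G.compBot γ t ⊆ s := by
  intro y hy
  obtain ⟨x, hxt, hx, hyx⟩ := mem_compBot.mp hy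
  exact hs ((hst x hx).mpr hxt) hyx

lemma subset_compTop (hs : IsIdeal s) (hst : ∀ x, G.color x ≠ γ → (x ∈ s ↔ x ∈ t)) :
    s ⊆ G.compTop γ t := by
  intro x hx
  refine mem_compTop.mpr ?_
  by_cases hxγ : G.color x = γ
  · exact .inr ⟨hxγ, fun y hyx hy => (hst y hy).mp (hs hx hyx)⟩
  · exact .inl ⟨(hst x hxγ).mp hx, hxγ⟩

lemma isIdeal_compBot : IsIdeal (G.compBot γ t) := by
  intro x hx y hyx
  obtain ⟨z, hzt, hz, hxz⟩ := mem_compBot.mp hx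
  exact mem_compBot.mpr ⟨z, hzt, hz, hyx.trans hxz⟩

lemma isIdeal_compTop (ht : IsIdeal t) : IsIdeal (G.compTop γ t) := by
  intro x hx y hyx
  refine mem_compTop.mpr ?_
  by_cases hyγ : G.color y = γ
  · refine .inr ⟨hyγ, fun z hzy hz => ?_⟩
    rcases mem_compTop.mp hx with ⟨hxt, -⟩ | ⟨-, hxt⟩
    · exact ht hxt (hzy.trans hyx)
    · exact hxt z (hzy.trans hyx) hz
  · rcases mem_compTop.mp hx with ⟨hxt, -⟩ | ⟨-, hxt⟩
    · exact .inl ⟨ht hxt hyx, hyγ⟩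
    · exact .inl ⟨hxt y hyx hyγ, hyγ⟩

lemma compTop_mono (hst : s ⊆ t) : G.compTop γ s ⊆ G.compTop γ t := by
  intro x hx
  rcases mem_compTop.mp hx with ⟨hxs, hx⟩ | ⟨hx, hxs⟩
  · exact mem_compTop.mpr (.inl ⟨hst hxs, hx⟩)
  · exact mem_compTop.mpr (.inr ⟨hx, fun y hyx hy => hst (hxs y hyx hy)⟩)

lemma compBot_mem_comp (ht : IsIdeal t) : G.compBot γ t ∈ G.comp γ t := by
  refine reflTransGen_gStep_of_subset isIdeal_compBot ht
    (compBot_subset ht fun _ _ => Iff.rfl) fun x hxt hx => ?_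
  by_contra hxγ
  exact hx (mem_compBot.mpr ⟨x, hxt, hxγ, le_rfl⟩)

lemma compTop_mem_comp (ht : IsIdeal t) : G.compTop γ t ∈ G.comp γ t := by
  refine reflTransGen_gStep_symm (reflTransGen_gStep_of_subset ht (isIdeal_compTop ht)
    (subset_compTop ht fun _ _ => Iff.rfl) fun x hx hxt => ?_)
  rcases mem_compTop.mp hx with ⟨hxt', -⟩ | ⟨hxγ, -⟩
  · exact absurd hxt' hxt
  · exact hxγ

lemma minCard_eq_card_compBot (ht : IsIdeal t) : G.minCard γ t = (G.compBot γ t).card := by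
  refine le_antisymm (Nat.sInf_le ⟨_, compBot_mem_comp ht, rfl⟩)
    (le_csInf ⟨_, t, .refl, rfl⟩ ?_)
  rintro _ ⟨s, hs, rfl⟩
  obtain ⟨hs, hst⟩ := isIdeal_and_mem_iff_of_mem_comp ht hs
  exact Finset.card_le_card (compBot_subset hs hst)

lemma maxCard_eq_card_compTop (ht : IsIdeal t) : G.maxCard γ t = (G.compTop γ t).card := by
  refine le_antisymm (csSup_le ⟨_, t, .refl, rfl⟩ ?_)
    (le_csSup ⟨Fintype.card P, ?_⟩ ⟨_, compTop_mem_comp ht, rfl⟩)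
  · rintro _ ⟨s, hs, rfl⟩
    obtain ⟨hs, hst⟩ := isIdeal_and_mem_iff_of_mem_comp ht hs
    exact Finset.card_le_card (subset_compTop hs hst)
  · rintro _ ⟨s, -, rfl⟩
    exact s.card_le_univ

lemma mcoord_eq_card_compBot_compTop (ht : IsIdeal t) :
    G.mcoord γ t = 2 * (t.card : ℤ) - (G.compBot γ t).card - (G.compTop γ t).card := by
  rw [mcoord, minCard_eq_card_compBot ht, maxCard_eq_card_compTop ht]
  ring

end Components

section Covers

variable [Fintype P] {M : Matrix (Fin 2) (Fin 2) ℤ}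

/-- As `M` is diagonal, adding `v` to `{x | x < v}` does not change the `(color u)`-weight. By
`mcoord_eq_card_compBot_compTop` this forces `u` below an element of `{x | x < v}` of the other
color, which contradicts `u ⋖ v`. -/
lemma color_eq_of_covBy (hM : G.MStructured M) (hdiag : M.IsDiag) {u v : P} (huv : u ⋖ v) :
    G.color u = G.color v := by
  by_contra hne
  set γ := G.color u
  set s : Finset P := Finset.univ.filter (· < v)
  set t : Finset P := Finset.univ.filter (· ≤ v)
  have hs : IsIdeal s := fun x hx y hyx => by
    simp only [s, Finset.mem_filter, Finset.mem_univ, true_and] at hx ⊢; exact hyx.trans_lt hx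
  have ht : IsIdeal t := fun x hx y hyx => by
    simp only [t, Finset.mem_filter, Finset.mem_univ, true_and] at hx ⊢; exact hyx.trans hx
  have hvs : v ∉ s := by simp [s]
  have hts : t = insert v s := by ext x; simp [s, t, le_iff_lt_or_eq, or_comm]
  have hmcoord : G.mcoord γ s = G.mcoord γ t := by
    have := congrFun (hM s t hs ht v hvs hts) γ
    rwa [Pi.add_apply, wt_apply, wt_apply, hdiag (Ne.symm hne), add_zero] at this
  have hbot_t : G.compBot γ t = t :=
    (compBot_subset ht fun _ _ => Iff.rfl).antisymm fun x hx =>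
      mem_compBot.mpr ⟨v, by simp [t], Ne.symm hne, by simpa [t] using hx⟩
  have htop : (G.compTop γ s).card < (G.compTop γ t).card := by
    have hsub : G.compTop γ s ⊆ G.compTop γ t := compTop_mono (hts ▸ Finset.subset_insert v s)
    refine Finset.card_lt_card ((Finset.ssubset_iff_of_subset hsub).mpr ⟨v, ?_, ?_⟩)
    · exact subset_compTop ht (fun _ _ => Iff.rfl) (by simp [t])
    · simp only [mem_compTop, not_or, not_and]
      exact ⟨fun h => absurd h hvs, fun h => absurd h.symm hne⟩
  have hbot_s : G.compBot γ s = s := by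
    have hsub : G.compBot γ s ⊆ s := compBot_subset hs fun _ _ => Iff.rfl
    have hle := Finset.card_le_card hsub
    have hcard : t.card = s.card + 1 := by rw [hts, Finset.card_insert_of_notMem hvs]
    rw [mcoord_eq_card_compBot_compTop hs, mcoord_eq_card_compBot_compTop ht, hbot_t,
      hcard] at hmcoord
    exact Finset.eq_of_subset_of_card_le hsub (by omega)
  obtain ⟨x, hxs, hx, hux⟩ := mem_compBot.mp (hbot_s ▸ (by simpa [s] using huv.lt : u ∈ s))
  exact huv.2 (hux.lt_of_ne fun h => hx (h ▸ rfl)) (by simpa [s] using hxs)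

lemma chain_eq_of_covBy (hG : G.IsTwoColorGridPoset) (hM : G.MStructured M) (hdiag : M.IsDiag)
    {u v : P} (huv : u ⋖ v) : G.chain u = G.chain v := by
  obtain ⟨⟨-, -, -, -, hcover⟩, -, hchange⟩ := hG
  exact (hcover u v huv).resolve_right fun h =>
    hchange u v (.single (.inl huv)) h (color_eq_of_covBy hM hdiag huv)

lemma chain_eq_of_le (hG : G.IsTwoColorGridPoset) (hM : G.MStructured M) (hdiag : M.IsDiag)
    {u v : P} (huv : u ≤ v) : G.chain u = G.chain v := by
  let _ := Fintype.toLocallyFiniteOrder (α := P)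
  have := (le_iff_reflTransGen_covBy.mp huv).lift G.chain
    fun _ _ h => chain_eq_of_covBy hG hM hdiag h
  rwa [Relation.reflTransGen_eq_self] at this

lemma color_eq_of_le (hG : G.IsTwoColorGridPoset) (hM : G.MStructured M) (hdiag : M.IsDiag)
    {u v : P} (huv : u ≤ v) : G.color u = G.color v := by
  have hchain := chain_eq_of_le hG hM hdiag huv
  obtain ⟨-, hcolor, -⟩ := hG
  exact hcolor u v hchain

/-- Going up to maximal elements preserves chain and color, and distinct maximal elements have
distinct colors, so two elements of the same color lie on the same chain. -/
lemma le_or_le_of_color_eq (hG : G.IsTwoColorGridPoset) (hM : G.MStructured M) (hdiag : M.IsDiag)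
    (hmax : G.MaxProperty) {u v : P} (huv : G.color u = G.color v) :
    u ≤ v ∨ v ≤ u := by
  obtain ⟨u', hu, hu'⟩ := Finite.exists_le_maximal (p := fun _ : P => True) trivial (a := u)
  obtain ⟨v', hv, hv'⟩ := Finite.exists_le_maximal (p := fun _ : P => True) trivial (a := v)
  have hmax' : u' = v' := by
    by_contra hne
    refine hmax.2 u' v' (fun y hy => hu'.2 trivial hy) (fun y hy => hv'.2 trivial hy) hne ?_
    rw [← color_eq_of_le hG hM hdiag hu, ← color_eq_of_le hG hM hdiag hv, huv]
  have hchain : G.chain u = G.chain v := by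
    rw [chain_eq_of_le hG hM hdiag hu, chain_eq_of_le hG hM hdiag hv, hmax']
  obtain ⟨⟨-, -, -, hfiber, -⟩, -⟩ := hG
  exact hfiber u v hchain

end Covers

section TwoChains

variable {s t : Finset P}

lemma filter_subset_or_subset (hchain : ∀ ⦃u v : P⦄, G.color u = G.color v → u ≤ v ∨ v ≤ u)
    (hs : IsIdeal s) (ht : IsIdeal t) (γ : Fin 2) :
    s.filter (G.color · = γ) ⊆ t.filter (G.color · = γ) ∨
      t.filter (G.color · = γ) ⊆ s.filter (G.color · = γ) := by
  refine or_iff_not_imp_left.mpr fun hst y hy => ?_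
  obtain ⟨x, hx, hxt⟩ := Finset.not_subset.mp hst
  simp only [Finset.mem_filter] at hx hy hxt ⊢
  refine ⟨?_, hy.2⟩
  rcases hchain (hy.2.trans hx.2.symm) with hyx | hxy
  · exact hs hx.1 hyx
  · exact absurd ⟨ht hy.1 hxy, hx.2⟩ hxt

lemma eq_of_card_filter_eq (hchain : ∀ ⦃u v : P⦄, G.color u = G.color v → u ≤ v ∨ v ≤ u)
    (hs : IsIdeal s) (ht : IsIdeal t)
    (h : ∀ γ, (s.filter (G.color · = γ)).card = (t.filter (G.color · = γ)).card) : s = t := by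
  have hfilter : ∀ γ, s.filter (G.color · = γ) = t.filter (G.color · = γ) := fun γ =>
    (filter_subset_or_subset hchain hs ht γ).elim
      (fun hst => Finset.eq_of_subset_of_card_le hst (h γ).ge)
      (fun hts => (Finset.eq_of_subset_of_card_le hts (h γ).le).symm)
  ext x
  simpa using congrArg (x ∈ ·) (hfilter (G.color x))

variable [Fintype P]

def colorClass (G : GridData P) (γ : Fin 2) : Finset P :=
  Finset.univ.filter (G.color · = γ)

variable {γ : Fin 2}

lemma compBot_eq_filter (hmono : ∀ ⦃u v : P⦄, u ≤ v → G.color u = G.color v)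
    (ht : IsIdeal t) : G.compBot γ t = t.filter (G.color · ≠ γ) := by
  ext y
  simp only [mem_compBot, Finset.mem_filter]
  exact ⟨fun ⟨x, hxt, hx, hyx⟩ => ⟨ht hxt hyx, hmono hyx ▸ hx⟩,
    fun ⟨hyt, hy⟩ => ⟨y, hyt, hy, le_rfl⟩⟩

lemma compTop_eq_filter_union (hmono : ∀ ⦃u v : P⦄, u ≤ v → G.color u = G.color v) :
    G.compTop γ t = t.filter (G.color · ≠ γ) ∪ G.colorClass γ := by
  ext x
  simp only [mem_compTop, colorClass, Finset.mem_union, Finset.mem_filter, Finset.mem_univ,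
    true_and]
  exact ⟨fun h => h.imp id And.left,
    fun h => h.imp id fun hx => ⟨hx, fun y hyx hy => absurd (hmono hyx ▸ hx) hy⟩⟩

lemma mcoord_eq_of_color_monotone (hmono : ∀ ⦃u v : P⦄, u ≤ v → G.color u = G.color v)
    (ht : IsIdeal t) :
    G.mcoord γ t = 2 * ((t.filter (G.color · = γ)).card : ℤ) - (G.colorClass γ).card := by
  have hdisj : Disjoint (t.filter (G.color · ≠ γ)) (G.colorClass γ) :=
    Finset.disjoint_left.mpr fun _ hx hx' =>
      (Finset.mem_filter.mp hx).2 (Finset.mem_filter.mp hx').2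
  have hsplit : (t.filter (G.color · = γ)).card + (t.filter (G.color · ≠ γ)).card = t.card :=
    Finset.card_filter_add_card_filter_not _
  rw [mcoord_eq_card_compBot_compTop ht, compBot_eq_filter hmono ht,
    compTop_eq_filter_union hmono, Finset.card_union_of_disjoint hdisj]
  push_cast
  omega

lemma wt_eq_of_color_monotone (hmono : ∀ ⦃u v : P⦄, u ≤ v → G.color u = G.color v)
    (ht : IsIdeal t) :
    G.wt t = fun γ => 2 * ((t.filter (G.color · = γ)).card : ℤ) - (G.colorClass γ).card :=
  funext fun γ => (wt_apply t γ).trans (mcoord_eq_of_color_monotone hmono ht)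

lemma wt_univ_of_color_monotone (hmono : ∀ ⦃u v : P⦄, u ≤ v → G.color u = G.color v)
    (γ : Fin 2) : G.wt Finset.univ γ = (G.colorClass γ).card := by
  rw [wt_eq_of_color_monotone hmono fun _ _ _ _ => Finset.mem_univ _]
  unfold colorClass
  ring

lemma exists_isIdeal_insert (hmono : ∀ ⦃u v : P⦄, u ≤ v → G.color u = G.color v)
    (ht : IsIdeal t) (hlt : (t.filter (G.color · = γ)).card < (G.colorClass γ).card) :
    ∃ x, G.color x = γ ∧ x ∉ t ∧ IsIdeal (insert x t) := by
  have hne : (G.colorClass γ \ t).Nonempty := by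
    refine Finset.sdiff_nonempty.mpr fun hsub => hlt.not_ge (Finset.card_le_card ?_)
    exact fun x hx => Finset.mem_filter.mpr ⟨hsub hx, (Finset.mem_filter.mp hx).2⟩
  obtain ⟨x, hx, hxmin⟩ := Finset.exists_minimal hne
  obtain ⟨hxγ, hxt⟩ := Finset.mem_sdiff.mp hx
  refine ⟨x, (Finset.mem_filter.mp hxγ).2, hxt, fun z hz y hyz => ?_⟩
  rcases Finset.mem_insert.mp hz with rfl | hz
  · by_contra hy
    have hyx : y ≠ z := fun h => hy (h ▸ Finset.mem_insert_self y t)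
    have hyK : y ∈ G.colorClass γ \ t := Finset.mem_sdiff.mpr
      ⟨Finset.mem_filter.mpr ⟨Finset.mem_univ y, (hmono hyz).trans (Finset.mem_filter.mp hxγ).2⟩,
        fun h => hy (Finset.mem_insert_of_mem h)⟩
    exact hyx (le_antisymm hyz (hxmin hyK hyz))
  · exact Finset.mem_insert_of_mem (ht hz hyz)

lemma exists_isIdeal_card_filter_eq (hmono : ∀ ⦃u v : P⦄, u ≤ v → G.color u = G.color v)
    (f : Fin 2 → ℕ) (hf : ∀ γ, f γ ≤ (G.colorClass γ).card) :
    ∃ t, IsIdeal t ∧ ∀ γ, (t.filter (G.color · = γ)).card = f γ := by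
  induction hn : f 0 + f 1 generalizing f with
  | zero => exact ⟨∅, fun _ hx => absurd hx (Finset.notMem_empty _), fun γ => by
      fin_cases γ <;> simp <;> omega⟩
  | succ n ih =>
    obtain ⟨γ, hγ⟩ : ∃ γ, 0 < f γ := by
      by_contra! h
      have := h 0; have := h 1; omega
    obtain ⟨t, ht, htf⟩ := ih (Function.update f γ (f γ - 1))
      (fun δ => by
        rcases eq_or_ne δ γ with rfl | hδ
        · rw [Function.update_self]; exact (Nat.sub_le _ 1).trans (hf δ)
        · rw [Function.update_of_ne hδ]; exact hf δ)
      (by fin_cases γ <;> simp [Function.update] at hγ ⊢ <;> omega)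
    obtain ⟨x, hxγ, hxt, hins⟩ := exists_isIdeal_insert hmono ht (γ := γ)
      (by rw [htf γ]; simp only [Function.update_self]; have := hf γ; omega)
    refine ⟨insert x t, hins, fun δ => ?_⟩
    rw [Finset.filter_insert]
    rcases eq_or_ne δ γ with rfl | hδ
    · rw [if_pos hxγ, Finset.card_insert_of_notMem fun h => hxt (Finset.mem_filter.mp h).1,
        htf, Function.update_self]
      omega
    · rw [if_neg (hxγ ▸ hδ.symm), htf, Function.update_of_ne hδ]

lemma sum_isIdeal_eq_sum_product {R : Type*} [AddCommMonoid R]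
    (hmono : ∀ ⦃u v : P⦄, u ≤ v → G.color u = G.color v)
    (hchain : ∀ ⦃u v : P⦄, G.color u = G.color v → u ≤ v ∨ v ≤ u) (g : ℕ → ℕ → R) :
    ∑ t ∈ Finset.univ.filter (fun t : Finset P => IsIdeal t),
        g (t.filter (G.color · = 0)).card (t.filter (G.color · = 1)).card =
      ∑ p ∈ Finset.range ((G.colorClass 0).card + 1) ×ˢ Finset.range ((G.colorClass 1).card + 1),
        g p.1 p.2 := by
  have hle : ∀ (t : Finset P) γ, (t.filter (G.color · = γ)).card ≤ (G.colorClass γ).card :=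
    fun t γ => Finset.card_le_card (Finset.filter_subset_filter _ t.subset_univ)
  refine Finset.sum_bij (fun t _ => ((t.filter (G.color · = 0)).card,
    (t.filter (G.color · = 1)).card)) (fun t _ => ?_) (fun s hs t ht hst => ?_)
    (fun p hp => ?_) (fun _ _ => rfl)
  · simpa [Nat.lt_succ_iff] using ⟨hle t 0, hle t 1⟩
  · simp only [Finset.mem_filter, Finset.mem_univ, true_and, Prod.mk.injEq] at hs ht hst
    exact eq_of_card_filter_eq hchain hs ht fun γ => by fin_cases γ <;> simp [hst]
  · simp only [Finset.mem_product, Finset.mem_range, Nat.lt_succ_iff] at hp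
    obtain ⟨t, ht, htp⟩ := exists_isIdeal_card_filter_eq hmono ![p.1, p.2]
      fun γ => by fin_cases γ <;> simp [hp]
    exact ⟨t, by simpa using ht, Prod.ext (by simpa using htp 0) (by simpa using htp 1)⟩

open AddMonoidAlgebra in
lemma sum_isIdeal_single_wt (hmono : ∀ ⦃u v : P⦄, u ≤ v → G.color u = G.color v)
    (hchain : ∀ ⦃u v : P⦄, G.color u = G.color v → u ≤ v ∨ v ≤ u) :
    ∑ t ∈ Finset.univ.filter (fun t : Finset P => IsIdeal t), single (G.wt t) (1 : ℤ) =
      (∑ j ∈ Finset.range ((G.colorClass 0).card + 1),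
        single ((2 * j - (G.colorClass 0).card : ℤ) • ![(1 : ℤ), 0]) (1 : ℤ)) *
      (∑ k ∈ Finset.range ((G.colorClass 1).card + 1),
        single ((2 * k - (G.colorClass 1).card : ℤ) • ![(0 : ℤ), 1]) (1 : ℤ)) := by
  rw [Finset.sum_mul_sum, ← Finset.sum_product', ← sum_isIdeal_eq_sum_product hmono hchain
    fun j k => single ((2 * j - (G.colorClass 0).card : ℤ) • ![(1 : ℤ), 0]) (1 : ℤ) *
      single ((2 * k - (G.colorClass 1).card : ℤ) • ![(0 : ℤ), 1]) (1 : ℤ)]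
  refine Finset.sum_congr rfl fun t ht => ?_
  rw [wt_eq_of_color_monotone hmono (Finset.mem_filter.mp ht).2, single_mul_single, mul_one]
  congr 1
  ext γ
  fin_cases γ <;> simp

end TwoChains

end GridData

section KleinFour

variable {G : Type*} [Group G] {a b : G}

lemma coe_closure_pair_of_mul_self_eq_one (ha : a * a = 1) (hb : b * b = 1) (hab : Commute a b) :
    (Subgroup.closure {a, b} : Set G) = {1, a, b, a * b} := by
  have haab : a * (a * b) = b := by rw [← mul_assoc, ha, one_mul]
  have haba : a * b * a = b := by rw [hab.eq, mul_assoc, ha, mul_one]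
  have habb : a * b * b = a := by rw [mul_assoc, hb, mul_one]
  have hbab : b * (a * b) = a := by rw [← mul_assoc, ← hab.eq, habb]
  have habab : a * b * (a * b) = 1 := by rw [← mul_assoc, haba, hb]
  let K : Subgroup G :=
    { carrier := {1, a, b, a * b}
      one_mem' := .inl rfl
      mul_mem' := by
        rintro x y (hx | hx | hx | hx) (hy | hy | hy | hy) <;> rw [hx, hy] <;>
          simp [ha, hb, hab.eq.symm, haab, haba, habb, hbab, habab]
      inv_mem' := by
        rintro x (hx | hx | hx | hx) <;> rw [hx] <;>
          simp [inv_eq_of_mul_eq_one_right ha, inv_eq_of_mul_eq_one_right hb, hab.eq] }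
  refine subset_antisymm (Subgroup.closure_le K |>.mpr ?_) ?_
  · rw [Set.insert_subset_iff, Set.singleton_subset_iff]
    exact ⟨.inr (.inl rfl), .inr (.inr (.inl rfl))⟩
  · rintro x (rfl | rfl | rfl | rfl)
    · exact one_mem _
    · exact Subgroup.subset_closure (by simp)
    · exact Subgroup.subset_closure (by simp)
    · exact mul_mem (Subgroup.subset_closure (by simp)) (Subgroup.subset_closure (by simp))

lemma finsum_mem_closure_pair_of_mul_self_eq_one {M : Type*} [AddCommMonoid M] (f : G → M)
    (ha : a * a = 1) (hb : b * b = 1) (hab : Commute a b) (ha1 : a ≠ 1) (hb1 : b ≠ 1)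
    (hne : a ≠ b) :
    ∑ᶠ w ∈ (Subgroup.closure {a, b} : Set G), f w = f 1 + f a + f b + f (a * b) := by
  have h1ab : 1 ≠ a * b := fun h =>
    hne ((eq_inv_of_mul_eq_one_left h.symm).trans (inv_eq_of_mul_eq_one_right hb))
  rw [coe_closure_pair_of_mul_self_eq_one ha hb hab,
    finsum_mem_insert _ (by simp [ha1.symm, hb1.symm, h1ab]) (Set.toFinite _),
    finsum_mem_insert _ (by simp [hne, hb1]) (Set.toFinite _),
    finsum_mem_pair (by simpa using ha1), add_assoc, add_assoc]

end KleinFour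

open AddMonoidAlgebra in
/-- Weyl's character formula for the `(n + 1)`-dimensional representation of `sl₂`. -/
lemma sum_range_single_mul_sub_single {k G : Type*} [CommRing k] [AddCommGroup G] (v : G)
    (n : ℕ) :
    (∑ j ∈ Finset.range (n + 1), single ((2 * j - n : ℤ) • v) (1 : k)) *
        (single v 1 - single (-v) 1) =
      single ((n + 1 : ℤ) • v) 1 - single (-((n + 1 : ℤ) • v)) 1 := by
  let f : ℕ → k[G] := fun i => single ((2 * i - n - 1 : ℤ) • v) 1
  have hterm : ∀ j : ℕ, single ((2 * j - n : ℤ) • v) (1 : k) * (single v 1 - single (-v) 1) =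
      f (j + 1) - f j := by
    intro j
    rw [mul_sub, single_mul_single, single_mul_single, mul_one]
    congr 2 <;> push_cast <;> module
  rw [Finset.sum_mul, Finset.sum_congr rfl fun j _ => hterm j, Finset.sum_range_sub]
  simp only [f]
  congr 2 <;> push_cast <;> module

section WeylGroup

open AddMonoidAlgebra

local notation "M₂" => Matrix (Fin 2) (Fin 2) ℤ

def reflα : M₂ˣ :=
  ⟨!![-1, 0; 0, 1], !![-1, 0; 0, 1], by simp [Matrix.one_fin_two], by simp [Matrix.one_fin_two]⟩

def reflβ : M₂ˣ :=
  ⟨!![1, 0; 0, -1], !![1, 0; 0, -1], by simp [Matrix.one_fin_two], by simp [Matrix.one_fin_two]⟩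

lemma genSet_eq_reflα_reflβ : genSet !![-1, 0; 0, 1] !![1, 0; 0, -1] = {reflα, reflβ} := by
  ext w
  simp [genSet, Units.ext_iff, reflα, reflβ]

lemma reflα_mulVec (x y : ℤ) : (reflα : M₂).mulVec ![x, y] = ![-x, y] := by
  ext i; fin_cases i <;> simp [reflα, Matrix.mulVec]

lemma reflβ_mulVec (x y : ℤ) : (reflβ : M₂).mulVec ![x, y] = ![x, -y] := by
  ext i; fin_cases i <;> simp [reflβ, Matrix.mulVec]

lemma det_reflα : (reflα : M₂).det = -1 := by
  simp [reflα, Matrix.det_fin_two_of]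

lemma det_reflβ : (reflβ : M₂).det = -1 := by
  simp [reflβ, Matrix.det_fin_two_of]

lemma finsum_closure_reflα_reflβ {A : Type*} [AddCommMonoid A] (f : M₂ˣ → A) :
    ∑ᶠ w ∈ (Subgroup.closure {reflα, reflβ} : Set M₂ˣ), f w =
      f 1 + f reflα + f reflβ + f (reflα * reflβ) := by
  refine finsum_mem_closure_pair_of_mul_self_eq_one f ?_ ?_ ?_ ?_ ?_ ?_ <;>
    simp [Units.ext_iff, Commute, SemiconjBy, reflα, reflβ, Matrix.one_fin_two]

lemma finsum_weylGroup (x y : ℤ) :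
    ∑ᶠ w ∈ (Subgroup.closure (genSet !![-1, 0; 0, 1] !![1, 0; 0, -1]) : Set M₂ˣ),
        single ((w : M₂).mulVec ![x, y]) (w : M₂).det =
      (single (x • ![(1 : ℤ), 0]) (1 : ℤ) - single (-(x • ![1, 0])) 1) *
        (single (y • ![(0 : ℤ), 1]) (1 : ℤ) - single (-(y • ![0, 1])) 1) := by
  rw [genSet_eq_reflα_reflβ, finsum_closure_reflα_reflβ]
  simp only [Units.val_one, Matrix.one_mulVec, Matrix.det_one, Units.val_mul,
    ← Matrix.mulVec_mulVec, Matrix.det_mul, reflα_mulVec, reflβ_mulVec, det_reflα, det_reflβ,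
    mul_sub, sub_mul, single_mul_single, single_neg, mul_one, mul_neg, neg_neg, Int.zsmul_eq_mul,
    Matrix.smul_cons, Matrix.smul_empty, Matrix.neg_cons, Matrix.neg_empty, Matrix.add_cons,
    Matrix.empty_add_empty, Matrix.head_cons, Matrix.tail_cons, mul_zero, add_zero, zero_add,
    neg_zero]
  ring

end WeylGroup

theorem stmt_0 {P : Type} [PartialOrder P] [Fintype P] (G : GridData P)
    (hG : G.IsTwoColorGridPoset) (hmax : G.MaxProperty)
    (hM : G.MStructured !![2, 0; 0, 2])
    (a b : ℤ) (ha : a = G.wt Finset.univ 0) (hb : b = G.wt Finset.univ 1)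
    (W : Subgroup ((Matrix (Fin 2) (Fin 2) ℤ)ˣ))
    (hW : W = Subgroup.closure (genSet !![-1, 0; 0, 1] !![1, 0; 0, -1])) :
    (∑ t ∈ Finset.univ.filter (fun t : Finset P => IsIdeal t),
        AddMonoidAlgebra.single (G.wt t) (1 : ℤ)) *
      (∑ᶠ w ∈ (W : Set ((Matrix (Fin 2) (Fin 2) ℤ)ˣ)), AddMonoidAlgebra.single
          ((w : Matrix (Fin 2) (Fin 2) ℤ).mulVec ![1, 1])
          ((w : Matrix (Fin 2) (Fin 2) ℤ).det)) =
    ∑ᶠ w ∈ (W : Set ((Matrix (Fin 2) (Fin 2) ℤ)ˣ)), AddMonoidAlgebra.single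
        ((w : Matrix (Fin 2) (Fin 2) ℤ).mulVec ![a + 1, b + 1])
        ((w : Matrix (Fin 2) (Fin 2) ℤ).det) := by
  have hdiag : (!![2, 0; 0, 2] : Matrix (Fin 2) (Fin 2) ℤ).IsDiag := by
    intro i j h
    fin_cases i <;> fin_cases j <;> simp_all
  have hmono : ∀ ⦃u v : P⦄, u ≤ v → G.color u = G.color v :=
    fun _ _ => G.color_eq_of_le hG hM hdiag
  have hchain : ∀ ⦃u v : P⦄, G.color u = G.color v → u ≤ v ∨ v ≤ u :=
    fun _ _ => G.le_or_le_of_color_eq hG hM hdiag hmax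
  obtain rfl := ha.trans (G.wt_univ_of_color_monotone hmono 0)
  obtain rfl := hb.trans (G.wt_univ_of_color_monotone hmono 1)
  rw [hW, finsum_weylGroup, finsum_weylGroup, G.sum_isIdeal_single_wt hmono hchain, one_smul,
    one_smul, mul_mul_mul_comm, sum_range_single_mul_sub_single, sum_range_single_mul_sub_single]
end

section
/- Let P be a two-color grid poset, t an order ideal of P, γ ∈ {α, β}, and T one of the fibers C_i of P whose vertices have color γ. If J and J′ are subsets of T such that t ∪ J, t ∖ J, t ∪ J′, and t ∖ J′ are all order ideals of P, then t ∪ (J ∪ J′) and t ∖ (J ∪ J′) are order ideals of P. -/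
open scoped Classical

/-- If `J` and `J'` are subsets of a color-`γ` fiber `C i` such that `t ∪ J`, `t \ J`,
`t ∪ J'`, `t \ J'` are all order ideals, then so are `t ∪ (J ∪ J')` and `t \ (J ∪ J')`. -/
theorem stmt_9 {P : Type} [PartialOrder P] [Fintype P] (G : GridData P)
    (hG : G.IsTwoColorGridPoset) (t : Finset P) (ht : IsIdeal t)
    (γ : Fin 2) (i : ℕ) (hi : i ∈ Finset.Icc 1 G.m)
    (hcol : ∀ u ∈ G.fiber i, G.color u = γ)
    (J J' : Finset P) (hJ : J ⊆ G.fiber i) (hJ' : J' ⊆ G.fiber i)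
    (h₁ : IsIdeal (t ∪ J)) (h₂ : IsIdeal (t \ J))
    (h₃ : IsIdeal (t ∪ J')) (h₄ : IsIdeal (t \ J')) :
    IsIdeal (t ∪ (J ∪ J')) ∧ IsIdeal (t \ (J ∪ J')) := by
  constructor
  · intro x hx y hy
    simp only [Finset.mem_union] at hx ⊢
    rcases hx with hx | hx | hx
    · have := h₁ (Finset.mem_union_left J hx) hy
      simp only [Finset.mem_union] at this; tauto
    · have := h₁ (Finset.mem_union_right t hx) hy
      simp only [Finset.mem_union] at this; tauto
    · have := h₃ (Finset.mem_union_right t hx) hy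
      simp only [Finset.mem_union] at this; tauto
  · intro x hx y hy
    simp only [Finset.mem_sdiff, Finset.mem_union] at hx ⊢
    obtain ⟨hxt, hxJ⟩ := hx
    have h2 := h₂ (Finset.mem_sdiff.2 ⟨hxt, fun h => hxJ (Or.inl h)⟩) hy
    have h4 := h₄ (Finset.mem_sdiff.2 ⟨hxt, fun h => hxJ (Or.inr h)⟩) hy
    simp only [Finset.mem_sdiff] at h2 h4
    tauto
end

section
/- Let P be a two-color grid poset, t an order ideal of P, γ ∈ {α, β}, and T one of the fibers C_i of P whose vertices have color γ. Then there exists a subset I ⊆ T such that t ∪ I and t ∖ I are order ideals of P and I contains every subset J ⊆ T with t ∪ J and t ∖ J order ideals; moreover, this largest subset I is an interval of the chain T, i.e., whenever x ≤ v ≤ y in T with x, y ∈ I, then v ∈ I. -/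
open scoped Classical

/-- There is a largest subset `I` of a color-`γ` fiber `C i` such that `t ∪ I` and
`t \ I` are order ideals, and this `I` is an interval of the chain `C i`. -/
theorem stmt_10 {P : Type} [PartialOrder P] [Fintype P] (G : GridData P)
    (hG : G.IsTwoColorGridPoset) (t : Finset P) (ht : IsIdeal t)
    (γ : Fin 2) (i : ℕ) (hi : i ∈ Finset.Icc 1 G.m)
    (hcol : ∀ u ∈ G.fiber i, G.color u = γ) :
    ∃ I ⊆ G.fiber i, IsIdeal (t ∪ I) ∧ IsIdeal (t \ I) ∧
      (∀ J ⊆ G.fiber i, IsIdeal (t ∪ J) → IsIdeal (t \ J) → J ⊆ I) ∧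
      (∀ x ∈ I, ∀ y ∈ I, ∀ v ∈ G.fiber i, x ≤ v → v ≤ y → v ∈ I) := by
  classical
  set I : Finset P := (G.fiber i).filter
    (fun x => ∃ J ⊆ G.fiber i, IsIdeal (t ∪ J) ∧ IsIdeal (t \ J) ∧ x ∈ J) with hI
  have hmemI : ∀ x, x ∈ I ↔ x ∈ G.fiber i ∧
      ∃ J, J ⊆ G.fiber i ∧ IsIdeal (t ∪ J) ∧ IsIdeal (t \ J) ∧ x ∈ J := by
    intro x; simp [hI, Finset.mem_filter]
  refine ⟨I, Finset.filter_subset _ _, ?_, ?_, ?_, ?_⟩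
  · intro x hx y hy
    rcases Finset.mem_union.1 hx with hx | hx
    · exact Finset.mem_union_left _ (ht hx hy)
    · obtain ⟨hxf, J, hJ, hJ1, hJ2, hxJ⟩ := (hmemI x).1 hx
      have := hJ1 (Finset.mem_union_right _ hxJ) hy
      rcases Finset.mem_union.1 this with h | h
      · exact Finset.mem_union_left _ h
      · exact Finset.mem_union_right _ ((hmemI y).2 ⟨hJ h, J, hJ, hJ1, hJ2, h⟩)
  · intro x hx y hy
    obtain ⟨hxt, hxI⟩ := Finset.mem_sdiff.1 hx
    refine Finset.mem_sdiff.2 ⟨ht hxt hy, ?_⟩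
    intro hyI
    obtain ⟨hyf, J, hJ, hJ1, hJ2, hyJ⟩ := (hmemI y).1 hyI
    have hxJ : x ∉ J := fun h => hxI ((hmemI x).2 ⟨hJ h, J, hJ, hJ1, hJ2, h⟩)
    have : y ∈ t \ J := hJ2 (Finset.mem_sdiff.2 ⟨hxt, hxJ⟩) hy
    exact (Finset.mem_sdiff.1 this).2 hyJ
  · intro J hJ hJ1 hJ2 x hxJ
    exact (hmemI x).2 ⟨hJ hxJ, J, hJ, hJ1, hJ2, hxJ⟩
  · intro x hx y hy v hvf hxv hvy
    obtain ⟨hxf, Jx, hJx, hJx1, hJx2, hxJx⟩ := (hmemI x).1 hx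
    obtain ⟨hyf, Jy, hJy, hJy1, hJy2, hyJy⟩ := (hmemI y).1 hy
    set J := Jx ∪ Jy with hJdef
    have hJsub : J ⊆ G.fiber i := Finset.union_subset hJx hJy
    have hJ1 : IsIdeal (t ∪ J) := by
      intro a ha b hb
      rcases Finset.mem_union.1 ha with ha | ha
      · exact Finset.mem_union_left _ (ht ha hb)
      · rcases Finset.mem_union.1 ha with ha | ha
        · have := hJx1 (Finset.mem_union_right _ ha) hb
          rcases Finset.mem_union.1 this with h | h
          · exact Finset.mem_union_left _ h
          · exact Finset.mem_union_right _ (Finset.mem_union_left _ h)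
        · have := hJy1 (Finset.mem_union_right _ ha) hb
          rcases Finset.mem_union.1 this with h | h
          · exact Finset.mem_union_left _ h
          · exact Finset.mem_union_right _ (Finset.mem_union_right _ h)
    have hJ2 : IsIdeal (t \ J) := by
      intro a ha b hb
      obtain ⟨hat, haJ⟩ := Finset.mem_sdiff.1 ha
      have haJx : a ∉ Jx := fun h => haJ (Finset.mem_union_left _ h)
      have haJy : a ∉ Jy := fun h => haJ (Finset.mem_union_right _ h)
      have h1 := hJx2 (Finset.mem_sdiff.2 ⟨hat, haJx⟩) hb
      have h2 := hJy2 (Finset.mem_sdiff.2 ⟨hat, haJy⟩) hb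
      refine Finset.mem_sdiff.2 ⟨(Finset.mem_sdiff.1 h1).1, ?_⟩
      intro h
      rcases Finset.mem_union.1 h with h | h
      · exact (Finset.mem_sdiff.1 h1).2 h
      · exact (Finset.mem_sdiff.1 h2).2 h
    have hyJ : y ∈ J := Finset.mem_union_right _ hyJy
    have hvtJ := hJ1 (Finset.mem_union_right _ hyJ) hvy
    have hvJ : v ∈ J := by
      rcases Finset.mem_union.1 hvtJ with hvt | hvJ
      · by_contra hvJ
        have hv : v ∈ t \ J := Finset.mem_sdiff.2 ⟨hvt, hvJ⟩
        have hx' := hJ2 hv hxv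
        exact (Finset.mem_sdiff.1 hx').2 (Finset.mem_union_left _ hxJx)
      · exact hvJ
    exact (hmemI v).2 ⟨hvf, J, hJsub, hJ1, hJ2, hvJ⟩
end

section
/- In a grid poset, every element covers at most two elements and is covered by at most two elements. -/
open scoped Classical

/-! Since the fibres of `chain` are chains, `chain` is injective on every antichain. The
elements covered by `x` form an antichain whose chain indices lie in `{c, c + 1}`, where
`c = chain x`, and the elements covering `x` form one with indices in `{c - 1, c}`. -/

section Cover

variable {α : Type*} [PartialOrder α]

theorem isAntichain_setOf_covBy (x : α) : IsAntichain (· ≤ ·) {y | y ⋖ x} :=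
  fun _ ha _ hb hne hle => ha.2 (lt_of_le_of_ne hle hne) hb.1

theorem isAntichain_setOf_covBy' (x : α) : IsAntichain (· ≤ ·) {y | x ⋖ y} :=
  fun _ ha _ hb hne hle => hb.2 ha.1 (lt_of_le_of_ne hle hne)

end Cover

namespace GridData

variable {P : Type} [PartialOrder P] {G : GridData P}

theorem IsGridPoset.injOn_chain_of_isAntichain (hG : G.IsGridPoset) {s : Set P}
    (hs : IsAntichain (· ≤ ·) s) : s.InjOn G.chain := fun _ ha _ hb hab =>
  (hG.2.2.2.1 _ _ hab).elim (hs.eq ha hb) (hs.eq' ha hb)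

theorem IsGridPoset.card_le_card_of_isAntichain (hG : G.IsGridPoset) {s : Finset P}
    (hs : IsAntichain (· ≤ ·) (s : Set P)) {t : Finset ℕ} (hst : ∀ y ∈ s, G.chain y ∈ t) :
    s.card ≤ t.card :=
  Finset.card_le_card_of_injOn G.chain hst (hG.injOn_chain_of_isAntichain hs)

end GridData

/-- In a grid poset, every element covers at most two elements and is covered
by at most two elements. -/
theorem stmt_11 {P : Type} [PartialOrder P] [Fintype P] (G : GridData P)
    (hG : G.IsGridPoset) (x : P) :
    (Finset.univ.filter (fun y : P => y ⋖ x)).card ≤ 2 ∧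
    (Finset.univ.filter (fun y : P => x ⋖ y)).card ≤ 2 := by
  have hcov := hG.2.2.2.2
  constructor
  · calc _ ≤ ({G.chain x, G.chain x + 1} : Finset ℕ).card := by
          refine hG.card_le_card_of_isAntichain ?_ fun y hy => ?_
          · simpa using isAntichain_setOf_covBy x
          · rcases hcov y x (Finset.mem_filter.1 hy).2 with h | h <;> simp [h]
      _ ≤ 2 := Finset.card_le_two
  · calc _ ≤ ({G.chain x - 1, G.chain x} : Finset ℕ).card := by
          refine hG.card_le_card_of_isAntichain ?_ fun y hy => ?_
          · simpa using isAntichain_setOf_covBy' x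
          · have := hcov x y (Finset.mem_filter.1 hy).2
            simp only [Finset.mem_insert, Finset.mem_singleton]
            omega
      _ ≤ 2 := Finset.card_le_two
end

section
/- Let P be a grid poset. Suppose P decomposes as P = P₁ ◁ Q, and Q (with the restricted chain function) decomposes as Q = P₂ ◁ P₃. Then P₁ ∪ P₂ is an order ideal of P, P decomposes as P = (P₁ ∪ P₂) ◁ P₃, and P₁ ∪ P₂ (with the restricted chain function) decomposes as P₁ ◁ P₂. -/
open scoped Classical

namespace GridData

variable {P : Type} [PartialOrder P] [Fintype P]

/-- The grid-poset conditions without surjectivity of the chain function. -/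
def IsGridPosetNS (G : GridData P) : Prop :=
  1 ≤ G.m ∧
  (∀ u : P, G.chain u ∈ Finset.Icc 1 G.m) ∧
  (∀ u v : P, G.chain u = G.chain v → u ≤ v ∨ v ≤ u) ∧
  (∀ u v : P, u ⋖ v → G.chain u = G.chain v ∨ G.chain u = G.chain v + 1)

/-- `S` (a subposet of `P` with the restricted chain function) decomposes as
`A ◁ (S \ A)`: `A` is a nonempty proper order ideal of `S`, and the chain index of any
maximal (resp. minimal) element of `A` is at most that of any maximal (resp. minimal)
element of `S \ A`. -/
def DecompOf (G : GridData P) (S A : Finset P) : Prop :=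
  A ⊆ S ∧ A.Nonempty ∧ A ≠ S ∧
  (∀ x ∈ A, ∀ y ∈ S, y ≤ x → y ∈ A) ∧
  (∀ u ∈ A, (∀ w ∈ A, u ≤ w → w = u) →
    ∀ v ∈ S \ A, (∀ w ∈ S \ A, v ≤ w → w = v) → G.chain u ≤ G.chain v) ∧
  (∀ u ∈ A, (∀ w ∈ A, w ≤ u → w = u) →
    ∀ v ∈ S \ A, (∀ w ∈ S \ A, w ≤ v → w = v) → G.chain u ≤ G.chain v)

end GridData

/-! If `A` is an order ideal of `S`, then the maximal elements of `S \ A` and the minimal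
elements of `A` are also maximal, resp. minimal, in `S`. Applied to `P₂ ⊆ Q`, this lets the
inequalities of `P = P₁ ◁ Q` and `Q = P₂ ◁ P₃` be chained together. The grid structure enters
only in comparing maximal elements of `P₁` and `P₂`: the chain index weakly decreases along
covers, hence is antitone, and every maximal element of `P₂` lies below a maximal element
of `Q`. -/

section LowerClosed

variable {P : Type} [PartialOrder P] {S A : Finset P}

theorem maximal_mem_finset_iff {u : P} :
    Maximal (· ∈ A) u ↔ u ∈ A ∧ ∀ w ∈ A, u ≤ w → w = u := by
  simp only [maximal_iff, eq_comm]

theorem minimal_mem_finset_iff {u : P} :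
    Minimal (· ∈ A) u ↔ u ∈ A ∧ ∀ w ∈ A, w ≤ u → w = u := by
  simp only [minimal_iff, eq_comm]

theorem Minimal.exists_minimal_le_of_sdiff {v : P} (hv : Minimal (· ∈ S \ A) v) :
    Minimal (· ∈ S) v ∨ ∃ w ∈ A, w ≤ v ∧ Minimal (· ∈ S) w := by
  obtain ⟨w, hwv, hw⟩ := S.exists_le_minimal (Finset.mem_sdiff.mp hv.prop).1
  by_cases hwA : w ∈ A
  · exact Or.inr ⟨w, hwA, hwv, hw⟩
  · have : w = v := le_antisymm hwv (hv.2 (Finset.mem_sdiff.mpr ⟨hw.prop, hwA⟩) hwv)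
    exact Or.inl (this ▸ hw)

variable (hA : ∀ x ∈ A, ∀ y ∈ S, y ≤ x → y ∈ A)
include hA

theorem Maximal.of_sdiff_of_lowerClosed {v : P} (hv : Maximal (· ∈ S \ A) v) :
    Maximal (· ∈ S) v := by
  obtain ⟨hvS, hvA⟩ := Finset.mem_sdiff.mp hv.prop
  refine ⟨hvS, fun w hw hvw => ?_⟩
  have hwA : w ∉ A := fun hwA => hvA (hA w hwA v hvS hvw)
  exact hv.2 (Finset.mem_sdiff.mpr ⟨hw, hwA⟩) hvw

theorem Minimal.of_lowerClosed {u : P} (hu : Minimal (· ∈ A) u) (huS : u ∈ S) :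
    Minimal (· ∈ S) u :=
  ⟨huS, fun w hw hwu => hu.2 (hA u hu.prop w hw hwu) hwu⟩

end LowerClosed

namespace GridData

variable {P : Type} [PartialOrder P] {G : GridData P}

theorem IsGridPosetNS.chain_antitone [Fintype P] (hG : G.IsGridPosetNS) :
    Antitone G.chain := by
  let : LocallyFiniteOrder P := Fintype.toLocallyFiniteOrder
  refine (antitone_iff_forall_covBy _).mpr fun u v huv => ?_
  rcases hG.2.2.2 u v huv with h | h <;> omega

theorem decompOf_iff {S A : Finset P} :
    G.DecompOf S A ↔ A ⊆ S ∧ A.Nonempty ∧ A ≠ S ∧ (∀ x ∈ A, ∀ y ∈ S, y ≤ x → y ∈ A) ∧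
      (∀ u, Maximal (· ∈ A) u → ∀ v, Maximal (· ∈ S \ A) v → G.chain u ≤ G.chain v) ∧
      (∀ u, Minimal (· ∈ A) u → ∀ v, Minimal (· ∈ S \ A) v → G.chain u ≤ G.chain v) := by
  simp only [DecompOf, maximal_mem_finset_iff, minimal_mem_finset_iff, and_imp]

theorem DecompOf.isIdeal [Fintype P] {A : Finset P} (h : G.DecompOf Finset.univ A) :
    IsIdeal A :=
  fun x hx y hyx => h.2.2.2.1 x hx y (Finset.mem_univ y) hyx

variable {S P₁ P₂ : Finset P}

theorem DecompOf.union (h₁ : G.DecompOf S P₁) (h₂ : G.DecompOf (S \ P₁) P₂) :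
    G.DecompOf S (P₁ ∪ P₂) := by
  rw [decompOf_iff] at h₁ h₂ ⊢
  obtain ⟨hsub₁, hne₁, -, hlow₁, hmax₁, hmin₁⟩ := h₁
  obtain ⟨hsub₂, -, hproper₂, hlow₂, hmax₂, hmin₂⟩ := h₂
  obtain ⟨hP₂S, hdisj⟩ := Finset.subset_sdiff.mp hsub₂
  have hlow : ∀ x ∈ P₁ ∪ P₂, ∀ y ∈ S, y ≤ x → y ∈ P₁ ∪ P₂ := by
    intro x hx y hy hyx
    by_cases hy₁ : y ∈ P₁
    · exact Finset.mem_union_left _ hy₁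
    · rcases Finset.mem_union.mp hx with hx₁ | hx₂
      · exact absurd (hlow₁ x hx₁ y hy hyx) hy₁
      · exact Finset.mem_union_right _ (hlow₂ x hx₂ y (Finset.mem_sdiff.mpr ⟨hy, hy₁⟩) hyx)
  have hP₃ : S \ (P₁ ∪ P₂) = (S \ P₁) \ P₂ := sdiff_sdiff_left.symm
  have hP₁U : (· ∈ P₁) ≤ (· ∈ P₁ ∪ P₂) := fun _ => Finset.mem_union_left _
  have hP₂U : (· ∈ P₂) ≤ (· ∈ P₁ ∪ P₂) := fun _ => Finset.mem_union_right _
  refine ⟨Finset.union_subset hsub₁ hP₂S, hne₁.mono Finset.subset_union_left, ?_, hlow, ?_, ?_⟩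
  · intro h
    apply hproper₂
    rw [← h, Finset.union_sdiff_left, Finset.sdiff_eq_self_of_disjoint hdisj]
  · intro u hu v hv
    rw [hP₃] at hv
    rcases Finset.mem_union.mp hu.prop with hu₁ | hu₂
    · exact hmax₁ u (hu.mono hP₁U hu₁) v (hv.of_sdiff_of_lowerClosed hlow₂)
    · exact hmax₂ u (hu.mono hP₂U hu₂) v hv
  · intro u hu v hv
    rw [hP₃] at hv
    rcases Finset.mem_union.mp hu.prop with hu₁ | hu₂
    · rcases hv.exists_minimal_le_of_sdiff with hvQ | ⟨w, hw₂, -, hwQ⟩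
      · exact hmin₁ u (hu.mono hP₁U hu₁) v hvQ
      · exact (hmin₁ u (hu.mono hP₁U hu₁) w hwQ).trans
          (hmin₂ w (hwQ.mono (fun _ hx => hsub₂ hx) hw₂) v hv)
    · exact hmin₂ u (hu.mono hP₂U hu₂) v hv

theorem DecompOf.left_union (hanti : Antitone G.chain) (h₁ : G.DecompOf S P₁)
    (h₂ : G.DecompOf (S \ P₁) P₂) : G.DecompOf (P₁ ∪ P₂) P₁ := by
  rw [decompOf_iff] at h₁ h₂ ⊢
  obtain ⟨hsub₁, hne₁, -, hlow₁, hmax₁, hmin₁⟩ := h₁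
  obtain ⟨hsub₂, hne₂, -, hlow₂, -, -⟩ := h₂
  obtain ⟨hP₂S, hdisj⟩ := Finset.subset_sdiff.mp hsub₂
  have hUS : P₁ ∪ P₂ ⊆ S := Finset.union_subset hsub₁ hP₂S
  refine ⟨Finset.subset_union_left, hne₁, ?_, fun x hx y hy hyx => hlow₁ x hx y (hUS hy) hyx, ?_⟩
  · intro h
    obtain ⟨q, hq⟩ := hne₂
    exact Finset.disjoint_left.mp hdisj hq (h ▸ Finset.mem_union_right P₁ hq)
  rw [Finset.union_sdiff_left, Finset.sdiff_eq_self_of_disjoint hdisj]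
  constructor
  · intro u hu v hv
    obtain ⟨w, hvw, hw⟩ := (S \ P₁).exists_le_maximal (hsub₂ hv.prop)
    exact (hmax₁ u hu w hw).trans (hanti hvw)
  · intro u hu v hv
    exact hmin₁ u hu v (hv.of_lowerClosed hlow₂ (hsub₂ hv.prop))

end GridData

/-- If `P = P₁ ◁ Q` and `Q = P₂ ◁ P₃`, then `P₁ ∪ P₂` is an order ideal of `P`,
`P = (P₁ ∪ P₂) ◁ P₃`, and `P₁ ∪ P₂ = P₁ ◁ P₂`. -/
theorem stmt_13 {P : Type} [PartialOrder P] [Fintype P] (G : GridData P)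
    (hG : G.IsGridPosetNS) (P₁ P₂ : Finset P)
    (h₁ : G.DecompOf Finset.univ P₁)
    (h₂ : G.DecompOf (Finset.univ \ P₁) P₂) :
    IsIdeal (P₁ ∪ P₂) ∧ G.DecompOf Finset.univ (P₁ ∪ P₂) ∧
      G.DecompOf (P₁ ∪ P₂) P₁ := by
  have hunion := h₁.union h₂
  exact ⟨hunion.isIdeal, hunion, h₁.left_union hG.chain_antitone h₂⟩
end

section
/- Let P be a two-color grid poset with the max property, L := J_color(P), t ∈ L with t ≠ max, and γ := κ(t). Then the set {s ∈ comp_γ(t) : s ≠ max and κ(s) = γ} is a sub-face of comp_γ(t) with respect to the poset isomorphism φ. -/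
open scoped Classical

namespace GridData

variable {P : Type} [PartialOrder P] [Fintype P]

/-- The indices `i ∈ {1,…,m}` of the fibers whose vertices have color `γ`. -/
def colorIdx (G : GridData P) (γ : Fin 2) : Finset ℕ :=
  (Finset.Icc 1 G.m).filter (fun i => ∃ u : P, G.chain u = i ∧ G.color u = γ)

/-- `I_j`: the largest subset `I` of the fiber `C i` such that both `t ∪ I` and
`t \ I` are order ideals (realized as the union of all such subsets). -/
noncomputable def Imax (G : GridData P) (t : Finset P) (i : ℕ) : Finset P :=
  (G.fiber i).filter (fun x =>
    ∃ J ⊆ G.fiber i, x ∈ J ∧ IsIdeal (t ∪ J) ∧ IsIdeal (t \ J))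

/-- The largest index `k ∈ {1,…,m}` such that the fiber `C k` is not contained in `t`. -/
noncomputable def kIdx (G : GridData P) (t : Finset P) : ℕ :=
  sSup {i | i ∈ Finset.Icc 1 G.m ∧ ¬ G.fiber i ⊆ t}

/-- `z_i`, the maximal element of the (chain) fiber `C i`. -/
noncomputable def zEl [Nonempty P] (G : GridData P) (i : ℕ) : P :=
  if h : ∃ z ∈ G.fiber i, ∀ w ∈ G.fiber i, w ≤ z then h.choose else Classical.arbitrary P

/-- `v(t) := z_k` where `k` is the largest index with `C_k ⊄ t`. -/
noncomputable def vOf [Nonempty P] (G : GridData P) (t : Finset P) : P :=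
  G.zEl (G.kIdx t)

/-- The vertex-coloring function `κ(t) := color(v(t))`. -/
noncomputable def kOf [Nonempty P] (G : GridData P) (t : Finset P) : Fin 2 :=
  G.color (G.vOf t)

/-- A face of `comp_γ(t)` with respect to the isomorphism
`φ(s) = (s ∩ I_1, …, s ∩ I_k)`: for some color-`γ` fiber index `q`, the set of
elements of `comp_γ(t)` whose `q`-th coordinate `s ∩ I_q` is the maximal element
`I_q` of the chain `J(I_q)`. -/
def IsFace (G : GridData P) (γ : Fin 2) (t : Finset P) (S : Set (Finset P)) : Prop :=
  ∃ q ∈ G.colorIdx γ, S = {s | s ∈ G.comp γ t ∧ G.Imax t q ⊆ s}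

/-- A sub-face of `comp_γ(t)`: the complement (within `comp_γ(t)`) of a face. -/
def IsSubFace (G : GridData P) (γ : Fin 2) (t : Finset P) (S : Set (Finset P)) : Prop :=
  ∃ q ∈ G.colorIdx γ, S = {s | s ∈ G.comp γ t ∧ ¬ G.Imax t q ⊆ s}

end GridData

/-!
Let `k` be the largest index with `C_k ⊄ t`, so `κ(t) = color z_k`. Moving inside the
`κ(t)`-component of `t` changes only vertices of color `κ(t)`, and an interval that is added or
removed in one go is monochromatic, hence stays inside one fiber. The max property makes colors
alternate between consecutive fibers and puts `z_{i+1}` under `z_i` for `i ≥ 2`; hence the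
fibers `C_i`, `i > k`, stay full along the component, since a `κ(t)`-colored `z_i` sits under
the differently colored `z_{i-1}`. So `κ(s) = κ(t)` exactly when `C_k ⊄ s`: otherwise the new top
index `j` is `k - 1` (a smaller `j` would add `z_{j+1} ≥ z_k` across two fibers), whose color is
the other one. Finally `C_k ⊆ s` iff `I_k ⊆ s`, which identifies the set as a sub-face.
-/

namespace GridData

variable {P : Type} [PartialOrder P] {G : GridData P} {γ : Fin 2} {s t : Finset P}

lemma IsTwoColorGridPoset.color_ne_of_covBy (hG : G.IsTwoColorGridPoset) {u v : P} (huv : u ⋖ v)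
    (h : G.chain u = G.chain v + 1) : G.color u ≠ G.color v :=
  hG.2.2 u v (.single (.inl huv)) h

lemma isIdeal_of_mem_comp (ht : IsIdeal t) (hs : s ∈ G.comp γ t) : IsIdeal s := by
  rcases Relation.ReflTransGen.cases_tail hs with rfl | ⟨_, _, hstep⟩
  exacts [ht, hstep.2.1]

lemma mem_iff_of_mem_comp (hs : s ∈ G.comp γ t) {x : P} (hx : G.color x ≠ γ) :
    x ∈ s ↔ x ∈ t := by
  induction hs with
  | refl => rfl
  | tail _ hstep ih =>
    obtain ⟨-, -, u, hu, ⟨-, rfl⟩ | ⟨-, rfl⟩⟩ := hstep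
    all_goals
      rw [← ih, Finset.mem_insert, or_iff_right]
      rintro rfl
      exact hx hu

variable [Fintype P]

lemma IsGridPoset.chain_antitone (hG : G.IsGridPoset) : Antitone G.chain := by
  let := Fintype.toLocallyFiniteOrder (α := P)
  refine (antitone_iff_forall_covBy _).2 fun u v huv => ?_
  rcases hG.2.2.2.2 u v huv with h | h <;> omega

lemma mem_fiber {i : ℕ} {x : P} : x ∈ G.fiber i ↔ G.chain x = i := by
  simp [fiber]

lemma IsGridPoset.exists_isGreatest_fiber (hG : G.IsGridPoset) {i : ℕ}
    (hi : i ∈ Finset.Icc 1 G.m) : ∃ z, IsGreatest (G.fiber i : Set P) z := by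
  obtain ⟨u, hu⟩ := hG.2.2.1 i hi
  obtain ⟨z, hz⟩ := Finset.exists_maximal (s := G.fiber i) ⟨u, mem_fiber.2 hu⟩
  refine ⟨z, hz.prop, fun w hw => ?_⟩
  have hwz : G.chain w = G.chain z := (mem_fiber.1 hw).trans (mem_fiber.1 hz.prop).symm
  exact (hG.2.2.2.1 w z hwz).elim id (hz.2 hw)

lemma le_kIdx {i : ℕ} (hi : i ∈ Finset.Icc 1 G.m) (h : ¬ G.fiber i ⊆ t) :
    i ≤ G.kIdx t :=
  le_csSup ⟨G.m, fun _ hj => (Finset.mem_Icc.1 hj.1).2⟩ ⟨hi, h⟩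

lemma IsGridPoset.kIdx_spec (hG : G.IsGridPoset) (ht : t ≠ Finset.univ) :
    G.kIdx t ∈ Finset.Icc 1 G.m ∧ ¬ G.fiber (G.kIdx t) ⊆ t := by
  obtain ⟨u, hu⟩ : ∃ u, u ∉ t := by
    by_contra! h
    exact ht (Finset.eq_univ_iff_forall.2 h)
  exact Nat.sSup_mem (s := {i | i ∈ Finset.Icc 1 G.m ∧ ¬ G.fiber i ⊆ t})
    ⟨G.chain u, hG.2.1 u, fun h => hu (h (mem_fiber.2 rfl))⟩
    ⟨G.m, fun _ hj => (Finset.mem_Icc.1 hj.1).2⟩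

lemma IsGridPoset.mem_of_kIdx_lt (hG : G.IsGridPoset) {x : P}
    (hx : G.kIdx t < G.chain x) : x ∈ t := by
  by_contra hxt
  exact hx.not_ge (le_kIdx (hG.2.1 x) fun h => hxt (h (mem_fiber.2 rfl)))

lemma IsTwoColorGridPoset.chain_eq_of_color_eq (hG : G.IsTwoColorGridPoset) {x y : P}
    (hxy : x ≤ y) (hcol : ∀ c, x ≤ c → c ≤ y → G.color c = G.color x) :
    G.chain y = G.chain x := by
  let := Fintype.toLocallyFiniteOrder (α := P)
  suffices ∀ b, Relation.ReflTransGen (· ⋖ ·) x b → b ≤ y → G.chain b = G.chain x from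
    this y (le_iff_reflTransGen_covBy.1 hxy) le_rfl
  intro b hxb
  induction hxb with
  | refl => exact fun _ => rfl
  | tail hxa hab ih =>
    intro hby
    have hxa' := le_iff_reflTransGen_covBy.2 hxa
    rw [← ih (hab.le.trans hby)]
    rcases hG.1.2.2.2.2 _ _ hab with h | h
    · exact h.symm
    · refine absurd ?_ (hG.color_ne_of_covBy hab h)
      rw [hcol _ hxa' (hab.le.trans hby), hcol _ (hxa'.trans hab.le) hby]

/-- The interval `[y, x]` lies in `s \ t`, so it is `γ`-colored. -/
lemma IsTwoColorGridPoset.chain_eq_of_le_of_mem_of_not_mem (hG : G.IsTwoColorGridPoset)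
    (hs : IsIdeal s) (ht : IsIdeal t) (hst : ∀ x, G.color x ≠ γ → (x ∈ s ↔ x ∈ t)) {x y : P}
    (hyx : y ≤ x) (hx : x ∈ s) (hy : y ∉ t) : G.chain x = G.chain y := by
  have hγ : ∀ c, y ≤ c → c ≤ x → G.color c = γ := fun c hyc hcx => by
    by_contra hc
    exact (fun hct => hy (ht hct hyc)) ((hst c hc).1 (hs hx hcx))
  exact hG.chain_eq_of_color_eq hyx fun c hyc hcx =>
    (hγ c hyc hcx).trans (hγ y le_rfl hyx).symm

lemma mem_Imax_chain_of_forall_chain_eq (ht : IsIdeal t) {x : P} (hx : x ∈ t)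
    (h : ∀ y ∈ t, x ≤ y → G.chain y = G.chain x) : x ∈ G.Imax t (G.chain x) := by
  refine Finset.mem_filter.2 ⟨mem_fiber.2 rfl, t.filter (x ≤ ·), fun y hy => ?_, ?_, ?_, ?_⟩
  · rw [Finset.mem_filter] at hy
    exact mem_fiber.2 (h y hy.1 hy.2)
  · simp [hx]
  · rwa [Finset.union_eq_left.2 (Finset.filter_subset _ _)]
  · intro c hc y hyc
    simp only [Finset.mem_sdiff, Finset.mem_filter, not_and] at hc ⊢
    exact ⟨ht hc.1 hyc, fun _ hxy => hc.2 hc.1 (hxy.trans hyc)⟩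

lemma IsGridPoset.mem_Imax_kIdx_of_not_mem (hG : G.IsGridPoset) (ht : IsIdeal t)
    {x : P} (hx : G.chain x = G.kIdx t) (hxt : x ∉ t) : x ∈ G.Imax t (G.kIdx t) := by
  refine Finset.mem_filter.2 ⟨mem_fiber.2 hx, G.fiber (G.kIdx t) \ t, Finset.sdiff_subset,
    Finset.mem_sdiff.2 ⟨mem_fiber.2 hx, hxt⟩, fun c hc y hyc => ?_, fun c hc y hyc => ?_⟩
  · simp only [Finset.mem_union, Finset.mem_sdiff, mem_fiber] at hc ⊢
    rcases hc with hc | ⟨hc, -⟩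
    · exact .inl (ht hc hyc)
    · by_cases hyt : y ∈ t
      · exact .inl hyt
      · have := hG.chain_antitone hyc
        have := mt hG.mem_of_kIdx_lt hyt
        exact .inr ⟨by omega, hyt⟩
  · simp only [Finset.mem_sdiff, mem_fiber, not_and, not_not] at hc ⊢
    exact ⟨ht hc.1 hyc, fun _ => ht hc.1 hyc⟩

lemma IsTwoColorGridPoset.Imax_kIdx_subset_iff (hG : G.IsTwoColorGridPoset) (ht : IsIdeal t)
    (hs : s ∈ G.comp γ t) : G.Imax t (G.kIdx t) ⊆ s ↔ G.fiber (G.kIdx t) ⊆ s := by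
  refine ⟨fun h x hx => ?_, (Finset.filter_subset _ _).trans⟩
  rw [mem_fiber] at hx
  by_cases hxt : x ∈ t
  · by_contra hxs
    refine hxs (h (hx ▸ mem_Imax_chain_of_forall_chain_eq ht hxt fun y hy hxy => ?_))
    exact hG.chain_eq_of_le_of_mem_of_not_mem ht (isIdeal_of_mem_comp ht hs)
      (fun z hz => (mem_iff_of_mem_comp hs hz).symm) hxy hy hxs
  · exact h (hG.1.mem_Imax_kIdx_of_not_mem ht hx hxt)

variable [Nonempty P]

lemma IsGridPoset.isGreatest_zEl (hG : G.IsGridPoset) {i : ℕ} (hi : i ∈ Finset.Icc 1 G.m) :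
    IsGreatest (G.fiber i : Set P) (G.zEl i) := by
  have h : ∃ z ∈ G.fiber i, ∀ w ∈ G.fiber i, w ≤ z := by
    obtain ⟨z, hz, hzw⟩ := hG.exists_isGreatest_fiber hi
    exact ⟨z, hz, fun w hw => hzw hw⟩
  rw [zEl, dif_pos h]
  exact ⟨h.choose_spec.1, fun w hw => h.choose_spec.2 w hw⟩

lemma IsGridPoset.chain_zEl (hG : G.IsGridPoset) {i : ℕ} (hi : i ∈ Finset.Icc 1 G.m) :
    G.chain (G.zEl i) = i :=
  mem_fiber.1 (hG.isGreatest_zEl hi).1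

lemma IsGridPoset.le_zEl (hG : G.IsGridPoset) {x : P} : x ≤ G.zEl (G.chain x) :=
  (hG.isGreatest_zEl (hG.2.1 x)).2 (mem_fiber.2 rfl)

lemma IsGridPoset.fiber_subset_iff_zEl_mem (hG : G.IsGridPoset) (ht : IsIdeal t)
    {i : ℕ} (hi : i ∈ Finset.Icc 1 G.m) : G.fiber i ⊆ t ↔ G.zEl i ∈ t := by
  refine ⟨fun h => h (hG.isGreatest_zEl hi).1, fun h x hx => ht h ?_⟩
  exact (hG.isGreatest_zEl hi).2 hx

lemma IsGridPoset.isMax_zEl_one (hG : G.IsGridPoset) : IsMax (G.zEl 1) := by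
  have h1 : (1 : ℕ) ∈ Finset.Icc 1 G.m := Finset.mem_Icc.2 ⟨le_rfl, hG.1⟩
  intro b hb
  have hb1 : G.chain b = 1 := by
    have := hG.chain_antitone hb
    have := (Finset.mem_Icc.1 (hG.2.1 b)).1
    rw [hG.chain_zEl h1] at *
    omega
  exact hb1 ▸ hG.le_zEl

lemma IsGridPoset.exists_covBy_zEl (hG : G.IsGridPoset) {i : ℕ} (hi : i ∈ Finset.Icc 1 G.m)
    (h : ¬ IsMax (G.zEl i)) : ∃ w, G.zEl i ⋖ w ∧ G.chain w + 1 = i := by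
  obtain ⟨w, hw⟩ := exists_covBy_of_wellFoundedLT h
  refine ⟨w, hw, ?_⟩
  rcases hG.2.2.2.2 _ _ hw with h | h
  · rw [hG.chain_zEl hi] at h
    exact absurd (h ▸ hG.le_zEl) hw.lt.not_ge
  · rw [hG.chain_zEl hi] at h
    exact h.symm

lemma IsTwoColorGridPoset.color_eq_color_zEl (hG : G.IsTwoColorGridPoset) (x : P) :
    G.color x = G.color (G.zEl (G.chain x)) :=
  hG.2.1 _ _ (hG.1.chain_zEl (hG.1.2.1 x)).symm

lemma IsTwoColorGridPoset.color_ne_of_chain_eq_add_one (hG : G.IsTwoColorGridPoset)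
    (hmax : G.MaxProperty) {u v : P} (h : G.chain u = G.chain v + 1) :
    G.color u ≠ G.color v := by
  have hu := hG.1.2.1 u
  rw [hG.color_eq_color_zEl u, hG.color_eq_color_zEl v]
  by_cases hz : IsMax (G.zEl (G.chain u))
  · have h2 := hmax.1 _ hz
    have hv1 : G.chain v = 1 := by
      have := (Finset.mem_Icc.1 (hG.1.2.1 v)).1
      rw [hG.1.chain_zEl hu] at h2
      omega
    refine hv1 ▸ hmax.2 _ _ hz hG.1.isMax_zEl_one fun he => ?_
    have := congrArg G.chain he
    rw [hG.1.chain_zEl hu, hG.1.chain_zEl (Finset.mem_Icc.2 ⟨le_rfl, hG.1.1⟩)] at this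
    omega
  · obtain ⟨w, hzw, hw⟩ := hG.1.exists_covBy_zEl hu hz
    have hwv : G.chain w = G.chain v := by omega
    rw [← hwv, ← hG.color_eq_color_zEl w]
    exact hG.color_ne_of_covBy hzw (by rw [hG.1.chain_zEl hu]; omega)

/-- By the max property `z (i + 1)` is not maximal for `i ≥ 2`, so it is covered by an element
of fiber `i`. -/
lemma IsTwoColorGridPoset.zEl_le_zEl (hG : G.IsTwoColorGridPoset) (hmax : G.MaxProperty)
    {i j : ℕ} (hj : 2 ≤ j) (hji : j ≤ i) (him : i ≤ G.m) : G.zEl i ≤ G.zEl j := by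
  induction i, hji using Nat.le_induction with
  | base => exact le_rfl
  | succ i hji ih =>
    have hi : i + 1 ∈ Finset.Icc 1 G.m := Finset.mem_Icc.2 ⟨by omega, him⟩
    have hz : ¬ IsMax (G.zEl (i + 1)) := fun hz => by
      have := hmax.1 _ hz
      rw [hG.1.chain_zEl hi] at this
      omega
    obtain ⟨w, hzw, hw⟩ := hG.1.exists_covBy_zEl hi hz
    calc G.zEl (i + 1) ≤ w := hzw.le
      _ ≤ G.zEl i := (Nat.add_right_cancel hw) ▸ hG.1.le_zEl
      _ ≤ G.zEl j := ih (by omega)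

lemma IsTwoColorGridPoset.mem_of_kIdx_lt_of_mem_comp (hG : G.IsTwoColorGridPoset)
    (hmax : G.MaxProperty) (ht : IsIdeal t) (htop : t ≠ Finset.univ)
    (hs : s ∈ G.comp (G.kOf t) t) {x : P} (hx : G.kIdx t < G.chain x) : x ∈ s := by
  obtain ⟨hk, -⟩ := hG.1.kIdx_spec htop
  have hsI := isIdeal_of_mem_comp ht hs
  have hmem : ∀ y, G.kIdx t < G.chain y → G.color y ≠ G.kOf t → y ∈ s := fun y hy hc =>
    (mem_iff_of_mem_comp hs hc).2 (hG.1.mem_of_kIdx_lt hy)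
  have hi : G.chain x ∈ Finset.Icc 1 G.m := hG.1.2.1 x
  have him := (Finset.mem_Icc.1 hi).2
  have hchain : ∀ {j}, G.kIdx t < j → j ≤ G.m → G.chain (G.zEl j) = j := fun h1 h2 =>
    hG.1.chain_zEl (Finset.mem_Icc.2 ⟨by omega, h2⟩)
  refine hsI ?_ hG.1.le_zEl
  by_cases hc : G.color (G.zEl (G.chain x)) = G.kOf t
  · -- colors alternate, so `z (chain x)` lies under `z (chain x - 1)`, of the other color
    have hk2 : G.kIdx t + 2 ≤ G.chain x := by
      refine (Nat.succ_le_of_lt hx).lt_of_ne' fun he => ?_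
      refine hG.color_ne_of_chain_eq_add_one hmax (v := G.zEl (G.kIdx t)) ?_ hc
      rw [hchain hx him, hG.1.chain_zEl hk, he]
    have hk1 := (Finset.mem_Icc.1 hk).1
    have hprev : G.chain (G.zEl (G.chain x - 1)) = G.chain x - 1 :=
      hchain (by omega) (by omega)
    refine hsI (hmem _ (by omega) fun hc' => ?_)
      (hG.zEl_le_zEl hmax (by omega) (Nat.sub_le _ 1) him)
    refine hG.color_ne_of_chain_eq_add_one hmax ?_ (hc.trans hc'.symm)
    rw [hchain hx him, hprev]
    omega
  · exact hmem _ (by rwa [hchain hx him]) hc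

lemma IsTwoColorGridPoset.kIdx_le_of_mem_comp (hG : G.IsTwoColorGridPoset)
    (hmax : G.MaxProperty) (ht : IsIdeal t) (htop : t ≠ Finset.univ)
    (hs : s ∈ G.comp (G.kOf t) t) (hsu : s ≠ Finset.univ) : G.kIdx s ≤ G.kIdx t :=
  not_lt.1 fun hlt => (hG.1.kIdx_spec hsu).2 fun _ hx =>
    hG.mem_of_kIdx_lt_of_mem_comp hmax ht htop hs (hlt.trans_eq (mem_fiber.1 hx).symm)

lemma IsTwoColorGridPoset.kIdx_eq_of_mem_comp (hG : G.IsTwoColorGridPoset)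
    (hmax : G.MaxProperty) (ht : IsIdeal t) (htop : t ≠ Finset.univ)
    (hs : s ∈ G.comp (G.kOf t) t) (h : ¬ G.fiber (G.kIdx t) ⊆ s) : G.kIdx s = G.kIdx t := by
  have hsu : s ≠ Finset.univ := by
    rintro rfl
    exact h (Finset.subset_univ _)
  exact le_antisymm (hG.kIdx_le_of_mem_comp hmax ht htop hs hsu)
    (le_kIdx (hG.1.kIdx_spec htop).1 h)

lemma IsTwoColorGridPoset.kOf_ne_of_mem_comp (hG : G.IsTwoColorGridPoset)
    (hmax : G.MaxProperty) (ht : IsIdeal t) (htop : t ≠ Finset.univ)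
    (hs : s ∈ G.comp (G.kOf t) t) (h : G.fiber (G.kIdx t) ⊆ s) (hsu : s ≠ Finset.univ) :
    G.kOf s ≠ G.kOf t := by
  obtain ⟨hk, hkt⟩ := hG.1.kIdx_spec htop
  obtain ⟨hj, hjs⟩ := hG.1.kIdx_spec hsu
  have hjk : G.kIdx s < G.kIdx t :=
    (hG.kIdx_le_of_mem_comp hmax ht htop hs hsu).lt_of_ne fun he => hjs (he ▸ h)
  have hj1 : G.kIdx s + 1 ∈ Finset.Icc 1 G.m := by
    simp only [Finset.mem_Icc] at hk ⊢
    omega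
  obtain hjk1 | hjk2 : G.kIdx s + 1 = G.kIdx t ∨ G.kIdx s + 2 ≤ G.kIdx t := by omega
  · refine (hG.color_ne_of_chain_eq_add_one hmax (u := G.zEl (G.kIdx t))
      (v := G.zEl (G.kIdx s)) ?_).symm
    rw [hG.1.chain_zEl hk, hG.1.chain_zEl hj, hjk1]
  · -- `z (kIdx t) ∉ t` would lie under `z (kIdx s + 1) ∈ s`, two fibers apart
    have hzk : G.zEl (G.kIdx t) ∉ t := mt (hG.1.fiber_subset_iff_zEl_mem ht hk).2 hkt
    have hzj : G.zEl (G.kIdx s + 1) ∈ s :=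
      hG.1.mem_of_kIdx_lt (by rw [hG.1.chain_zEl hj1]; omega)
    have := hG.chain_eq_of_le_of_mem_of_not_mem (isIdeal_of_mem_comp ht hs) ht
      (fun _ => mem_iff_of_mem_comp hs)
      (hG.zEl_le_zEl hmax (Nat.succ_le_succ (Finset.mem_Icc.1 hj).1) (by omega)
        (Finset.mem_Icc.1 hk).2) hzj hzk
    rw [hG.1.chain_zEl hk, hG.1.chain_zEl hj1] at this
    omega

end GridData

/-- Theorem 5.1: if `P` has the max property, `t ≠ max` and `γ = κ(t)`, then
`{s ∈ comp_γ(t) : s ≠ max and κ(s) = γ}` is a sub-face of `comp_γ(t)`. -/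
theorem stmt_14 {P : Type} [PartialOrder P] [Fintype P] [Nonempty P] (G : GridData P)
    (hG : G.IsTwoColorGridPoset) (hmax : G.MaxProperty)
    (t : Finset P) (ht : IsIdeal t) (htop : t ≠ Finset.univ)
    (γ : Fin 2) (hγ : γ = G.kOf t) :
    G.IsSubFace γ t
      {s | s ∈ G.comp γ t ∧ s ≠ Finset.univ ∧ G.kOf s = γ} := by
  subst hγ
  have hk := (hG.1.kIdx_spec htop).1
  refine ⟨G.kIdx t, Finset.mem_filter.2 ⟨hk, _, hG.1.chain_zEl hk, rfl⟩, ?_⟩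
  ext s
  refine and_congr_right fun hs => ?_
  rw [hG.Imax_kIdx_subset_iff ht hs]
  constructor
  · rintro ⟨hsu, hκ⟩ hsub
    exact hG.kOf_ne_of_mem_comp hmax ht htop hs hsub hsu hκ
  · intro hsub
    refine ⟨fun hsu => hsub (hsu ▸ Finset.subset_univ _), ?_⟩
    simp only [GridData.kOf, GridData.vOf, hG.kIdx_eq_of_mem_comp hmax ht htop hs hsub]
end
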